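/- Let M be a CPDL model, w a world, and φ, ψ formulas such that φ ∈ pre(ψ) and M, w ⊨ φ. Then there exists a model chain for (M, w, φ, ψ). -/

import Mathlib

mutual
inductive Fml : Type where
  | var : ℕ → Fml
  | neg : Fml → Fml
  | and : Fml → Fml → Fml
  | or : Fml → Fml → Fml
  | dia : Prog → Fml → Fml
  | box : Prog → Fml → Fml
  deriving DecidableEq
inductive Prog : Type where
  | atom : ℕ → Prog
  | conv : ℕ → Prog
  | seq : Prog → Prog → Prog
  | choice : Prog → Prog → Prog
  | star : Prog → Prog
  | test : Fml → Prog
  deriving DecidableEq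
end

structure Model (W : Type) where
  R : ℕ → W → W → Prop
  V : ℕ → W → Prop

mutual
def Sat {W : Type} (M : Model W) : W → Fml → Prop
  | w, .var p => M.V p w
  | w, .neg φ => ¬ Sat M w φ
  | w, .and φ ψ => Sat M w φ ∧ Sat M w ψ
  | w, .or φ ψ => Sat M w φ ∨ Sat M w ψ
  | w, .dia γ φ => ∃ v, PRel M γ w v ∧ Sat M v φ
  | w, .box γ φ => ∀ v, PRel M γ w v → Sat M v φ
def PRel {W : Type} (M : Model W) : Prog → W → W → Prop
  | .atom a, w, v => M.R a w v
  | .conv a, w, v => M.R a v w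
  | .seq γ δ, w, v => ∃ u, PRel M γ w u ∧ PRel M δ u v
  | .choice γ δ, w, v => PRel M γ w v ∨ PRel M δ w v
  | .star γ, w, v => Relation.ReflTransGen (fun a b => PRel M γ a b) w v
  | .test φ, w, v => w = v ∧ Sat M w φ
end
mutual
def IsNNF : Fml → Prop
  | .var _ => True
  | .neg (.var _) => True
  | .neg _ => False
  | .and φ ψ => IsNNF φ ∧ IsNNF ψ
  | .or φ ψ => IsNNF φ ∧ IsNNF ψ
  | .dia γ φ => IsNNFP γ ∧ IsNNF φ
  | .box γ φ => IsNNFP γ ∧ IsNNF φ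
def IsNNFP : Prog → Prop
  | .atom _ => True
  | .conv _ => True
  | .seq γ δ => IsNNFP γ ∧ IsNNFP δ
  | .choice γ δ => IsNNFP γ ∧ IsNNFP δ
  | .star γ => IsNNFP γ
  | .test φ => IsNNF φ
end

mutual
/-- `nnf φ` is the negation normal form of `φ`. -/
def nnf : Fml → Fml
  | .var p => .var p
  | .neg φ => nnfNeg φ
  | .and φ ψ => .and (nnf φ) (nnf ψ)
  | .or φ ψ => .or (nnf φ) (nnf ψ)
  | .dia γ φ => .dia γ (nnf φ)
  | .box γ φ => .box γ (nnf φ)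
/-- `nnfNeg φ = nnf (¬ φ)`, written `∼φ`. -/
def nnfNeg : Fml → Fml
  | .var p => .neg (.var p)
  | .neg φ => nnf φ
  | .and φ ψ => .or (nnfNeg φ) (nnfNeg ψ)
  | .or φ ψ => .and (nnfNeg φ) (nnfNeg ψ)
  | .dia γ φ => .box γ (nnfNeg φ)
  | .box γ φ => .dia γ (nnfNeg φ)
end

/-- Literal programs: atomic programs or converses of atomic programs. -/
inductive Lit : Type where
  | atom : ℕ → Lit
  | conv : ℕ → Lit
  deriving DecidableEq

def Lit.toProg : Lit → Prog
  | .atom a => .atom a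
  | .conv a => .conv a

/-- The converse `l⁻` of a literal program. -/
def Lit.inv : Lit → Lit
  | .atom a => .conv a
  | .conv a => .atom a

/-- The reduction relation `⤳` on ⟨·⟩-formulae. -/
inductive Red : Fml → Fml → Prop where
  | seq (γ δ χ) : Red (.dia (.seq γ δ) χ) (.dia γ (.dia δ χ))
  | choiceL (γ δ χ) : Red (.dia (.choice γ δ) χ) (.dia γ χ)
  | choiceR (γ δ χ) : Red (.dia (.choice γ δ) χ) (.dia δ χ)
  | star1 (γ χ) : Red (.dia (.star γ) χ) χ
  | star2 (γ χ) : Red (.dia (.star γ) χ) (.dia γ (.dia (.star γ) χ))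
  | test (ϕ χ) : Red (.dia (.test ϕ) χ) χ

/-- `InPre ψ φ` means `φ ∈ pre(ψ)`, i.e. `φ = ⟨γ₁⟩…⟨γ_k⟩ψ`. -/
inductive InPre (ψ : Fml) : Fml → Prop where
  | base : InPre ψ ψ
  | step (γ φ) : InPre ψ φ → InPre ψ (.dia γ φ)

/-- `φ` is an eventuality: `φ = ⟨γ₁⟩…⟨γ_k⟩⟨γ*⟩ψ`. -/
def IsEv (φ : Fml) : Prop := ∃ γ ψ, InPre (.dia (.star γ) ψ) φ

mutual
/-- Size of formulas. -/
def fsize : Fml → ℕ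
  | .var _ => 1
  | .neg (.var _) => 1
  | .neg φ => 1 + fsize φ
  | .and φ ψ => 1 + fsize φ + fsize ψ
  | .or φ ψ => 1 + fsize φ + fsize ψ
  | .dia γ φ => psize γ + fsize φ
  | .box γ φ => psize γ + fsize φ
/-- Size of programs. -/
def psize : Prog → ℕ
  | .atom _ => 1
  | .conv _ => 1
  | .seq γ δ => 1 + psize γ + psize δ
  | .choice γ δ => 1 + psize γ + psize δ
  | .star γ => 1 + psize γ
  | .test φ => 1 + fsize φ
end
/-- One decomposition step generating the closure `cl(φ)`. -/
inductive ClStep : Fml → Fml → Prop where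
  | diaLit (l : Lit) (ψ) : ClStep (.dia l.toProg ψ) ψ
  | boxLit (l : Lit) (ψ) : ClStep (.box l.toProg ψ) ψ
  | andL (φ ψ) : ClStep (.and φ ψ) φ
  | andR (φ ψ) : ClStep (.and φ ψ) ψ
  | orL (φ ψ) : ClStep (.or φ ψ) φ
  | orR (φ ψ) : ClStep (.or φ ψ) ψ
  | boxChoiceL (γ δ φ) : ClStep (.box (.choice γ δ) φ) (.box γ φ)
  | boxChoiceR (γ δ φ) : ClStep (.box (.choice γ δ) φ) (.box δ φ)
  | boxStar1 (γ φ) : ClStep (.box (.star γ) φ) φ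
  | boxStar2 (γ φ) : ClStep (.box (.star γ) φ) (.box γ (.box (.star γ) φ))
  | diaTest1 (ψ φ) : ClStep (.dia (.test ψ) φ) φ
  | diaTest2 (ψ φ) : ClStep (.dia (.test ψ) φ) ψ
  | diaSeq (γ δ φ) : ClStep (.dia (.seq γ δ) φ) (.dia γ (.dia δ φ))
  | boxSeq (γ δ φ) : ClStep (.box (.seq γ δ) φ) (.box γ (.box δ φ))
  | diaChoiceL (γ δ φ) : ClStep (.dia (.choice γ δ) φ) (.dia γ φ)
  | diaChoiceR (γ δ φ) : ClStep (.dia (.choice γ δ) φ) (.dia δ φ)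
  | diaStar1 (γ φ) : ClStep (.dia (.star γ) φ) φ
  | diaStar2 (γ φ) : ClStep (.dia (.star γ) φ) (.dia γ (.dia (.star γ) φ))
  | boxTest1 (ψ φ) : ClStep (.box (.test ψ) φ) φ
  | boxTest2 (ψ φ) : ClStep (.box (.test ψ) φ) (nnfNeg ψ)

/-- The closure `cl(φ)`: the least set containing `φ` and closed under `ClStep`. -/
def Cl (φ : Fml) : Set Fml := {ψ | Relation.ReflTransGen ClStep φ ψ}

/-- A single step of a (model) chain: a literal-program diamond is instantiated,
otherwise a `⤳`-reduction happens at the same world. -/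
def ChainStep {W : Type} (M : Model W) : (W × Fml) → (W × Fml) → Prop
  | (w, .dia (.atom a) χ), (w', χ') => χ' = χ ∧ M.R a w w'
  | (w, .dia (.conv a) χ), (w', χ') => χ' = χ ∧ M.R a w' w
  | (w, χ), (w', χ') => Red χ χ' ∧ w' = w

/-- `σ` is a model chain for `(M, w, φ, ψ)`. -/
def ModelChain {W : Type} (M : Model W) (w : W) (φ ψ : Fml) (σ : List (W × Fml)) : Prop :=
  ∃ h : σ ≠ [], σ.head h = (w, φ) ∧ (σ.getLast h).2 = ψ ∧
    (∀ p ∈ σ, Sat M p.1 p.2) ∧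
    ∀ i, (h1 : i + 1 < σ.length) →
      ChainStep M (σ.get ⟨i, by omega⟩) (σ.get ⟨i + 1, h1⟩)

open Classical in
/-- `ex φ`: the largest non-eventuality `ψ` with `φ ∈ pre(ψ)`. -/
noncomputable def ex : Fml → Fml
  | .dia γ ψ => if IsEv (.dia γ ψ) then ex ψ else .dia γ ψ
  | φ => φ

mutual
/-- `SubF χ φ`: `χ` is a subformula of the formula `φ`. -/
inductive SubF : Fml → Fml → Prop where
  | refl (φ) : SubF φ φ
  | neg {χ φ} : SubF χ φ → SubF χ (.neg φ)
  | andL {χ φ ψ} : SubF χ φ → SubF χ (.and φ ψ)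
  | andR {χ φ ψ} : SubF χ ψ → SubF χ (.and φ ψ)
  | orL {χ φ ψ} : SubF χ φ → SubF χ (.or φ ψ)
  | orR {χ φ ψ} : SubF χ ψ → SubF χ (.or φ ψ)
  | diaF {χ γ φ} : SubF χ φ → SubF χ (.dia γ φ)
  | diaP {χ γ φ} : SubP χ γ → SubF χ (.dia γ φ)
  | boxF {χ γ φ} : SubF χ φ → SubF χ (.box γ φ)
  | boxP {χ γ φ} : SubP χ γ → SubF χ (.box γ φ)
/-- `SubP χ γ`: `χ` is a subformula of the program `γ`. -/
inductive SubP : Fml → Prog → Prop where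
  | seqL {χ γ δ} : SubP χ γ → SubP χ (.seq γ δ)
  | seqR {χ γ δ} : SubP χ δ → SubP χ (.seq γ δ)
  | choiceL {χ γ δ} : SubP χ γ → SubP χ (.choice γ δ)
  | choiceR {χ γ δ} : SubP χ δ → SubP χ (.choice γ δ)
  | star {χ γ} : SubP χ γ → SubP χ (.star γ)
  | test {χ φ} : SubF χ φ → SubP χ (.test φ)
end
/-- `ann` is an annotation for `Γ`: it maps some eventualities `φ ∈ Γ`
to a formula `ann φ ∈ Γ` with `φ ⤳ ann φ`. -/
def IsAnnotation (Γ : Set Fml) (ann : Fml → Option Fml) : Prop :=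
  ∀ φ φ', ann φ = some φ' → φ ∈ Γ ∧ IsEv φ ∧ φ' ∈ Γ ∧ Red φ φ'

/-- `ann` is full on `Γ`: it is defined on all eventualities of `Γ`. -/
def FullAnn (Γ : Set Fml) (ann : Fml → Option Fml) : Prop :=
  ∀ φ ∈ Γ, IsEv φ → (ann φ).isSome

/-- `ann` is non-cyclic: there is no cycle `φ₀, …, φ_n` with `ann φ_i = φ_{i+1 mod n+1}`. -/
def NonCyclic (ann : Fml → Option Fml) : Prop :=
  ¬ ∃ (n : ℕ) (f : ℕ → Fml), (∀ i < n, ann (f i) = some (f (i + 1))) ∧ ann (f n) = some (f 0)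

/-- One step of iterating an annotation (identity where undefined). -/
def annStep (ann : Fml → Option Fml) (φ : Fml) : Fml := (ann φ).getD φ

/-- The pure-formula version of a chain step:
if `χ = ⟨l⟩χ₀` for a literal program `l` then `χ' = χ₀`, else `χ ⤳ χ'`. -/
def FStep : Fml → Fml → Prop
  | .dia (.atom _) χ, χ' => χ' = χ
  | .dia (.conv _) χ, χ' => χ' = χ
  | χ, χ' => Red χ χ'

mutual
/-- The atomic program `d` occurs in a formula. -/
def OccursF (d : ℕ) : Fml → Prop
  | .var _ => False
  | .neg φ => OccursF d φ
  | .and φ ψ => OccursF d φ ∨ OccursF d ψ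
  | .or φ ψ => OccursF d φ ∨ OccursF d ψ
  | .dia γ φ => OccursP d γ ∨ OccursF d φ
  | .box γ φ => OccursP d γ ∨ OccursF d φ
/-- The atomic program `d` occurs in a program (as `d` or `d⁻`). -/
def OccursP (d : ℕ) : Prog → Prop
  | .atom a => a = d
  | .conv a => a = d
  | .seq γ δ => OccursP d γ ∨ OccursP d δ
  | .choice γ δ => OccursP d γ ∨ OccursP d δ
  | .star γ => OccursP d γ
  | .test φ => OccursF d φ
end

/-- `(M, w, chn)` annotated-satisfies `(Γ, ann)`. -/
def AnnSat {W : Type} (M : Model W) (w : W)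
    (chn : Fml → Option (List (W × Fml))) (Γ : Set Fml) (ann : Fml → Option Fml) : Prop :=
  (∀ ψ ∈ Γ, Sat M w ψ) ∧
  (∀ ψ ∈ Γ, IsEv ψ → (chn ψ).isSome) ∧
  (∀ ψ σ, IsEv ψ → chn ψ = some σ →
    ModelChain M w ψ (ex ψ) σ ∧
    (∀ i, (h : i < σ.length) → ∀ χ, σ.get ⟨i, h⟩ = (w, χ) → IsEv χ → chn χ = some (σ.drop i)) ∧
    (∀ ψ', ann ψ = some ψ' → ∃ h : 1 < σ.length, σ.get ⟨1, h⟩ = (w, ψ')))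

/-! A diamond `⟨γ⟩χ` holding at `w` because `w` reaches `v` along `γ` with `M, v ⊨ χ` lets any
chain starting at `(v, χ)` be extended backwards to one starting at `(w, ⟨γ⟩χ)`: by recursion on
`γ`, each compound program contributes its `⤳`-step, a literal its accessibility edge, and `γ*`
one unfolding `⟨γ*⟩χ ⤳ ⟨γ⟩⟨γ*⟩χ` per `γ`-step of the path. Iterating along the prefix
`⟨γ₁⟩…⟨γ_k⟩` of `φ` gives the theorem. -/

namespace ModelChain

variable {W : Type} {M : Model W}

theorem singleton {w : W} {ψ : Fml} (h : Sat M w ψ) : ModelChain M w ψ ψ [(w, ψ)] := by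
  refine ⟨List.cons_ne_nil _ _, rfl, rfl, ?_, fun i hi => absurd hi (by simp)⟩
  simpa using h

theorem sat_start {w : W} {φ ψ : Fml} {σ : List (W × Fml)} (h : ModelChain M w φ ψ σ) :
    Sat M w φ := by
  obtain ⟨hne, hhead, -, hsat, -⟩ := h
  simpa [hhead] using hsat _ (List.head_mem hne)

theorem cons {w v : W} {φ χ ψ : Fml} {σ : List (W × Fml)} (hσ : ModelChain M v χ ψ σ)
    (hw : Sat M w φ) (hstep : ChainStep M (w, φ) (v, χ)) :
    ModelChain M w φ ψ ((w, φ) :: σ) := by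
  obtain ⟨hne, hhead, hlast, hsat, hsteps⟩ := hσ
  obtain _ | ⟨x, τ⟩ := σ
  · exact absurd rfl hne
  obtain rfl : x = (v, χ) := hhead
  refine ⟨List.cons_ne_nil _ _, rfl, by rwa [List.getLast_cons hne], ?_, ?_⟩
  · rintro p (_ | ⟨_, hp⟩)
    exacts [hw, hsat p hp]
  · rintro (_ | i) hi
    exacts [hstep, hsteps i (by simpa using hi)]

theorem exists_dia_of_prel (ψ : Fml) : ∀ (γ : Prog) {w v : W} {χ : Fml} {σ : List (W × Fml)},
    PRel M γ w v → ModelChain M v χ ψ σ → ∃ σ', ModelChain M w (.dia γ χ) ψ σ'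
  | .atom _, _, v, _, _, hR, hσ => ⟨_, hσ.cons ⟨v, hR, hσ.sat_start⟩ ⟨rfl, hR⟩⟩
  | .conv _, _, v, _, _, hR, hσ => ⟨_, hσ.cons ⟨v, hR, hσ.sat_start⟩ ⟨rfl, hR⟩⟩
  | .seq γ δ, _, v, χ, _, ⟨u, hγ, hδ⟩, hσ => by
    obtain ⟨σδ, hσδ⟩ := exists_dia_of_prel ψ δ hδ hσ
    obtain ⟨σγ, hσγ⟩ := exists_dia_of_prel ψ γ hγ hσδ
    exact ⟨_, hσγ.cons ⟨v, ⟨u, hγ, hδ⟩, hσ.sat_start⟩ ⟨Red.seq γ δ χ, rfl⟩⟩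
  | .choice γ δ, _, v, χ, _, hR, hσ => by
    have hw : Sat M _ (.dia (.choice γ δ) χ) := ⟨v, hR, hσ.sat_start⟩
    rcases hR with hγ | hδ
    · obtain ⟨σ', hσ'⟩ := exists_dia_of_prel ψ γ hγ hσ
      exact ⟨_, hσ'.cons hw ⟨Red.choiceL γ δ χ, rfl⟩⟩
    · obtain ⟨σ', hσ'⟩ := exists_dia_of_prel ψ δ hδ hσ
      exact ⟨_, hσ'.cons hw ⟨Red.choiceR γ δ χ, rfl⟩⟩
  | .star γ, _, v, χ, _, hR, hσ => by
    have hv : Sat M v χ := hσ.sat_start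
    induction (hR : Relation.ReflTransGen (PRel M γ) _ v)
      using Relation.ReflTransGen.head_induction_on with
    | refl => exact ⟨_, hσ.cons ⟨v, .refl, hv⟩ ⟨Red.star1 γ χ, rfl⟩⟩
    | head hab hbv ih =>
      obtain ⟨σb, hσb⟩ := ih
      obtain ⟨σa, hσa⟩ := exists_dia_of_prel ψ γ hab hσb
      exact ⟨_, hσa.cons ⟨v, .head hab hbv, hv⟩ ⟨Red.star2 γ χ, rfl⟩⟩
  | .test _, _, _, χ, _, ⟨rfl, hφ⟩, hσ =>
    ⟨_, hσ.cons ⟨_, ⟨rfl, hφ⟩, hσ.sat_start⟩ ⟨Red.test _ χ, rfl⟩⟩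

end ModelChain

/-- if `φ ∈ pre(ψ)` and `M, w ⊨ φ` then there is a model chain
for `(M, w, φ, ψ)`. -/
theorem exists_model_chain {W : Type} (M : Model W) (w : W) (φ ψ : Fml)
    (hpre : InPre ψ φ) (hsat : Sat M w φ) :
    ∃ σ, ModelChain M w φ ψ σ := by
  induction hpre generalizing w with
  | base => exact ⟨_, .singleton hsat⟩
  | step γ φ _ ih =>
    obtain ⟨v, hR, hv⟩ := hsat
    obtain ⟨σ, hσ⟩ := ih v hv
    exact ModelChain.exists_dia_of_prel ψ γ hR hσ
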